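/- arXiv:math/0311128 — 6 statements merged into one kernel-verified Lean document; each statement's English description precedes it below -/
import Mathlib

section
/- In Sym^n(A), for any m × n matrix of elements a_{ij} ∈ A, the product satisfies (n!)^{m-1} · Π_{i=1}^{m} [⊗_{j=1}^n a_{ij}] = Σ_{σ ∈ {id} × S_n^{m-1}} [⊗_{j=1}^n (Π_{i=1}^m a_{i σ_i^{-1}(j)})], where [·] denotes the class in Sym^n(A) and the inner product is taken in A in the order i = 1, ..., m. -/
open PiTensorProduct
open scoped TensorProduct

noncomputable section

/-- The action of σ ∈ Sₙ on A^{⊗n}: σ • (a₁ ⊗ ⋯ ⊗ aₙ) = a_{σ⁻¹(1)} ⊗ ⋯ ⊗ a_{σ⁻¹(n)}. -/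
def permAct (A : Type*) [Ring A] [Algebra ℂ A] (n : ℕ) (σ : Equiv.Perm (Fin n)) :
    (⨂[ℂ] (_ : Fin n), A) →ₗ[ℂ] ⨂[ℂ] (_ : Fin n), A :=
  (reindex ℂ (fun _ : Fin n => A) σ).toLinearMap

/-- In Sym^n(A) (the quotient of A^{⊗n} by the span W of the differences
⊗f − σ•(⊗f), with its product `mul` characterized by the m = 2 case of the product
formula), for any m × n matrix (a_{ij}) of elements of A:
(n!)^{m−1} · Π_{i=1}^{m} [⊗ⱼ a_{ij}] = Σ_{σ ∈ {id} × Sₙ^{m−1}} [⊗ⱼ Π_{i=1}^{m} a_{i σᵢ⁻¹(j)}],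
the inner product in A taken in the order i = 1, …, m, and the outer product being
the m-fold `mul`-product taken in the order i = 1, …, m. -/
theorem stmt_1 (A : Type*) [Ring A] [Algebra ℂ A] (n m : ℕ) (hm : 0 < m)
    (W : Submodule ℂ (⨂[ℂ] (_ : Fin n), A))
    (hW : W = Submodule.span ℂ
      {v | ∃ (f : Fin n → A) (σ : Equiv.Perm (Fin n)),
        v = tprod ℂ f - permAct A n σ (tprod ℂ f)})
    (mul : ((⨂[ℂ] (_ : Fin n), A) ⧸ W) →ₗ[ℂ]
      ((⨂[ℂ] (_ : Fin n), A) ⧸ W) →ₗ[ℂ] ((⨂[ℂ] (_ : Fin n), A) ⧸ W))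
    (hmul : ∀ f g : Fin n → A,
      (n.factorial : ℂ) • mul (W.mkQ (tprod ℂ f)) (W.mkQ (tprod ℂ g)) =
        ∑ σ : Equiv.Perm (Fin n), W.mkQ (tprod ℂ (fun j => f j * g (σ⁻¹ j))))
    (a : Fin m → Fin n → A) :
    (n.factorial : ℂ) ^ (m - 1) •
        (List.ofFn (fun i : Fin m => W.mkQ (tprod ℂ (a i)))).foldr
          (fun u v => mul u v) (W.mkQ (tprod ℂ (fun _ => (1 : A)))) =
      ∑ σ ∈ Finset.univ.filter
          (fun σ : Fin m → Equiv.Perm (Fin n) => σ ⟨0, hm⟩ = 1),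
        W.mkQ (tprod ℂ
          (fun j => (List.ofFn (fun i : Fin m => a i ((σ i)⁻¹ j))).prod)) := by
  classical
  have hfac : (n.factorial : ℂ) ≠ 0 := Nat.cast_ne_zero.mpr n.factorial_ne_zero
  have hone : ∀ f : Fin n → A,
      mul (W.mkQ (tprod ℂ f)) (W.mkQ (tprod ℂ fun _ => (1 : A))) = W.mkQ (tprod ℂ f) := by
    intro f
    have h := hmul f (fun _ => 1)
    simp only [mul_one] at h
    rw [Finset.sum_const, Finset.card_univ, Fintype.card_perm, Fintype.card_fin,
        ← Nat.cast_smul_eq_nsmul ℂ] at h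
    exact smul_right_injective _ hfac h
  obtain ⟨k, rfl⟩ : ∃ k, m = k + 1 := ⟨m - 1, (Nat.succ_pred_eq_of_pos hm).symm⟩
  have h0 : (⟨0, hm⟩ : Fin (k + 1)) = 0 := rfl
  rw [h0]
  simp only [Nat.add_sub_cancel]
  clear h0 hm hW
  induction k with
  | zero =>
    have hfilter : Finset.univ.filter
        (fun σ : Fin 1 → Equiv.Perm (Fin n) => σ 0 = 1) = {fun _ => 1} := by
      ext σ
      simp [funext_iff, Fin.forall_fin_one]
    rw [hfilter, Finset.sum_singleton]
    simp only [pow_zero, one_smul, List.ofFn_succ, List.ofFn_zero, List.foldr_cons,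
      List.foldr_nil, List.prod_cons, List.prod_nil, inv_one, Equiv.Perm.coe_one, id_eq,
      mul_one]
    exact hone (a 0)
  | succ k ih =>
    -- Notation
    set q : (Fin n → A) → ((⨂[ℂ] (_ : Fin n), A) ⧸ W) := fun f => W.mkQ (tprod ℂ f) with hqdef
    set g : (Fin (k + 1) → Equiv.Perm (Fin n)) → (Fin n → A) :=
      fun τ j => (List.ofFn (fun i : Fin (k + 1) => a i.succ ((τ i)⁻¹ j))).prod with hgdef
    set F : (Fin (k + 1) → Equiv.Perm (Fin n)) → ((⨂[ℂ] (_ : Fin n), A) ⧸ W) :=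
      fun ρ => q (fun j => a 0 j * g ρ j) with hFdef
    have hih := ih (fun i => a i.succ)
    -- LHS computation
    have lhs_eq :
        (n.factorial : ℂ) ^ (k + 1) •
          (List.ofFn (fun i : Fin (k + 2) => W.mkQ (tprod ℂ (a i)))).foldr
            (fun u v => mul u v) (W.mkQ (tprod ℂ (fun _ => (1 : A)))) =
        ∑ τ ∈ Finset.univ.filter
            (fun τ : Fin (k + 1) → Equiv.Perm (Fin n) => τ 0 = 1),
          ∑ σ : Equiv.Perm (Fin n), q (fun j => a 0 j * g τ (σ⁻¹ j)) := by
      rw [List.ofFn_succ, List.foldr_cons]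
      rw [pow_succ, mul_comm, mul_smul, ← map_smul (mul (W.mkQ (tprod ℂ (a 0))))]
      rw [hih, map_sum, Finset.smul_sum]
      refine Finset.sum_congr rfl fun τ _ => ?_
      exact hmul (a 0) (g τ)
    rw [lhs_eq]
    -- RHS reindexing: sum over filtered σ : Fin (k+2) → Perm equals sum over all ρ
    have rhs_eq :
        (∑ σ ∈ Finset.univ.filter
            (fun σ : Fin (k + 2) → Equiv.Perm (Fin n) => σ 0 = 1),
          W.mkQ (tprod ℂ
            (fun j => (List.ofFn (fun i : Fin (k + 2) => a i ((σ i)⁻¹ j))).prod))) =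
        ∑ ρ : Fin (k + 1) → Equiv.Perm (Fin n), F ρ := by
      refine Finset.sum_nbij' (fun σ => fun i => σ i.succ) (fun ρ => Fin.cons 1 ρ)
        (fun σ _ => Finset.mem_univ _) (fun ρ _ => ?_) (fun σ hσ => ?_) (fun ρ _ => ?_)
        (fun σ hσ => ?_)
      · simp [Finset.mem_filter]
      · simp only [Finset.mem_filter, Finset.mem_univ, true_and] at hσ
        funext i
        refine Fin.cases ?_ (fun i => ?_) i
        · simp [hσ]
        · simp
      · funext i
        simp
      · simp only [Finset.mem_filter, Finset.mem_univ, true_and] at hσ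
        congr 1
        refine congrArg _ (funext fun j => ?_)
        rw [List.ofFn_succ, List.prod_cons, hσ]
        simp [hFdef, hgdef, hqdef]
    rw [rhs_eq]
    -- combine double sum via bijection (τ, σ) ↦ (fun i => σ * τ i)
    have := Finset.sum_product'
      (s := Finset.univ.filter (fun τ : Fin (k + 1) → Equiv.Perm (Fin n) => τ 0 = 1))
      (t := (Finset.univ : Finset (Equiv.Perm (Fin n))))
      (f := fun τ σ => q (fun j => a 0 j * g τ (σ⁻¹ j)))
    rw [← this]
    refine Finset.sum_nbij' (fun p => fun i => p.2 * p.1 i)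
      (fun ρ => (fun i => (ρ 0)⁻¹ * ρ i, ρ 0))
      (fun p _ => Finset.mem_univ _) (fun ρ _ => ?_) (fun p hp => ?_) (fun ρ _ => ?_)
      (fun p hp => ?_)
    · simp [Finset.mem_filter, Finset.mem_product]
    · simp only [Finset.mem_product, Finset.mem_filter, Finset.mem_univ, true_and] at hp
      ext i
      · simp [hp.1]
      · simp [hp.1]
    · funext i
      simp
    · simp only [Finset.mem_product, Finset.mem_filter, Finset.mem_univ, true_and] at hp
      simp only [hFdef, hgdef, hqdef]
      refine congrArg _ (congrArg _ (funext fun j => ?_))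
      congr 1

end
end

section
/- In the q-Weyl algebra ℂ⟨x,y,z⟩[q]/⟨zx − xz − y, yx − qxy, zy − qyz⟩, for all a, b ∈ ℕ: z^a x^b = Σ_{k=0}^{min(a,b)} χ_k(a) [b]_k x^{b−k} y^k z^{a−k}, where χ_k(a) = Σ_{I ⊆ [1,a], |I| = k} q^{χ(I)} and χ(I) = #{(i,j) : i > j, i ∈ I, j ∉ I}. -/
/-- The q-integer [m] = 1 + q + ... + q^{m−1}. -/
def qint {R : Type*} [Semiring R] (q : R) (m : ℕ) : R := ∑ i ∈ Finset.range m, q ^ i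

/-- The falling q-factorial [b]_k = [b][b−1]⋯[b−k+1]. -/
def qfall {R : Type*} [Semiring R] (q : R) (b k : ℕ) : R :=
  ((List.range k).map (fun j => qint q (b - j))).prod

/-- The crossing number χ(I) = #{(i,j) : i > j, i ∈ I, j ∈ [1,a] \ I}. -/
def crossNum (a : ℕ) (I : Finset ℕ) : ℕ :=
  ((I ×ˢ (Finset.Icc 1 a \ I)).filter (fun p => p.2 < p.1)).card

/-- χ_k(a) = Σ_{I ⊆ [1,a], |I| = k} q^{χ(I)}. -/
def chiPoly {R : Type*} [Semiring R] (q : R) (a k : ℕ) : R :=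
  ∑ I ∈ (Finset.Icc 1 a).powersetCard k, q ^ crossNum a I

section
variable {R : Type*} [Ring R] {q : R}

/-- pull a commuting factor out to the left -/
lemma pull {c r : R} (h : Commute c r) (s : R) : r * (c * s) = c * (r * s) := by
  rw [← mul_assoc, ← h.eq, mul_assoc]

lemma pull' {c r : R} (h : Commute c r) : r * c = c * r := h.symm.eq

lemma comm_qint (hq : ∀ r : R, Commute q r) (m : ℕ) (r : R) : Commute (qint q m) r := by
  unfold qint
  exact Commute.sum_left _ _ _ fun i _ => (hq r).pow_left i

lemma comm_qfall (hq : ∀ r : R, Commute q r) (b k : ℕ) (r : R) : Commute (qfall q b k) r :=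
  (Commute.list_prod_right _ _ (by
    intro s hs
    simp only [List.mem_map] at hs
    obtain ⟨j, _, rfl⟩ := hs
    exact (comm_qint hq _ r).symm)).symm

lemma qint_succ (hq : ∀ r : R, Commute q r) (m : ℕ) : qint q (m+1) = 1 + q * qint q m := by
  unfold qint
  rw [Finset.sum_range_succ', Finset.mul_sum]
  simp only [pow_succ, pow_zero, add_comm]
  congr 1
  apply Finset.sum_congr rfl
  intro i _
  exact pull' (hq (q ^ i))

lemma qfall_zero (b : ℕ) : qfall q b 0 = (1 : R) := by simp [qfall]

lemma qfall_succ (b k : ℕ) : qfall q b (k+1) = qint q b * qfall q (b-1) k := by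
  unfold qfall
  rw [List.range_succ_eq_map, List.map_cons, List.prod_cons, List.map_map]
  simp only [Nat.sub_zero]
  congr 2
  apply List.map_congr_left
  intro i _
  simp only [Function.comp_apply, Nat.succ_eq_add_one]
  congr 1
  omega

lemma qfall_eq_zero {b k : ℕ} (h : b < k) : qfall q b k = (0 : R) := by
  unfold qfall
  apply List.prod_eq_zero
  simp only [List.mem_map, List.mem_range]
  exact ⟨b, h, by simp [qint]⟩

lemma zpow_mul_y (hq : ∀ r : R, Commute q r) (y z : R) (h3 : z * y = q * (y * z)) (m : ℕ) :
    z ^ m * y = q ^ m * (y * z ^ m) := by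
  induction m with
  | zero => simp
  | succ m ih =>
    calc z ^ (m+1) * y = z ^ m * (z * y) := by rw [pow_succ, mul_assoc]
    _ = z ^ m * (q * (y * z)) := by rw [h3]
    _ = q * (z ^ m * (y * z)) := by rw [pull (hq _)]
    _ = q * (z ^ m * y * z) := by rw [mul_assoc]
    _ = q * (q ^ m * (y * z ^ m) * z) := by rw [ih]
    _ = q ^ (m+1) * (y * z ^ (m+1)) := by
        rw [mul_assoc (q ^ m), ← mul_assoc q, ← pow_succ', mul_assoc y, ← pow_succ]

lemma ypow_mul_x (hq : ∀ r : R, Commute q r) (x y : R) (h2 : y * x = q * (x * y)) (k : ℕ) :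
    y ^ k * x = q ^ k * (x * y ^ k) :=
  zpow_mul_y hq x y h2 k

lemma z_mul_xpow (hq : ∀ r : R, Commute q r) (x y z : R)
    (h1 : z * x = x * z + y) (h2 : y * x = q * (x * y)) (b : ℕ) :
    z * x ^ b = x ^ b * z + qint q b * (x ^ (b-1) * y) := by
  induction b with
  | zero => simp [qint]
  | succ b ih =>
    match b, ih with
    | 0, _ => simpa [qint] using h1
    | Nat.succ m, ih =>
      calc z * x ^ (m+1+1) = (z * x ^ (m+1)) * x := by rw [pow_succ, mul_assoc]
      _ = (x ^ (m+1) * z + qint q (m+1) * (x ^ (m+1-1) * y)) * x := by rw [ih]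
      _ = x ^ (m+1) * (z * x) + qint q (m+1) * (x ^ m * (y * x)) := by
          rw [add_mul, mul_assoc, mul_assoc, mul_assoc]
          simp only [Nat.add_sub_cancel]
      _ = x ^ (m+1) * (x * z + y) + qint q (m+1) * (x ^ m * (q * (x * y))) := by
          rw [h1, h2]
      _ = x ^ (m+1+1) * z + x ^ (m+1) * y + q * qint q (m+1) * (x ^ (m+1) * y) := by
          rw [mul_add, ← mul_assoc (x ^ (m+1)), ← pow_succ, pull (hq (x ^ m)),
            pull (hq (qint q (m+1))), mul_assoc q, ← mul_assoc (x ^ m), ← pow_succ,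
            add_assoc, ← mul_assoc q]
      _ = x ^ (m+1+1) * z + qint q (m+1+1) * (x ^ (m+1) * y) := by
          rw [qint_succ hq (m+1), add_mul, one_mul, add_assoc]
end

lemma crossNum_empty (a : ℕ) : crossNum a ∅ = 0 := by
  simp [crossNum]

lemma crossNum_of_subset {a : ℕ} {I : Finset ℕ} (hI : I ⊆ Finset.Icc 1 a) :
    crossNum (a+1) I = crossNum a I := by
  unfold crossNum
  congr 1
  ext ⟨i, j⟩
  simp only [Finset.mem_filter, Finset.mem_product, Finset.mem_sdiff, Finset.mem_Icc]
  constructor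
  · rintro ⟨⟨hi, ⟨hj1, hj2⟩, hjI⟩, hji⟩
    have := (Finset.mem_Icc.mp (hI hi)).2
    exact ⟨⟨hi, ⟨hj1, by omega⟩, hjI⟩, hji⟩
  · rintro ⟨⟨hi, ⟨hj1, hj2⟩, hjI⟩, hji⟩
    exact ⟨⟨hi, ⟨hj1, by omega⟩, hjI⟩, hji⟩

lemma crossNum_insert {a : ℕ} {J : Finset ℕ} (hJ : J ⊆ Finset.Icc 1 a) :
    crossNum (a+1) (insert (a+1) J) = crossNum a J + (Finset.Icc 1 a \ J).card := by
  classical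
  have hnot : (a+1) ∉ J := fun h => by have := (Finset.mem_Icc.mp (hJ h)).2; omega
  have hcomp : Finset.Icc 1 (a+1) \ insert (a+1) J = Finset.Icc 1 a \ J := by
    ext j
    simp only [Finset.mem_sdiff, Finset.mem_Icc, Finset.mem_insert]
    constructor
    · rintro ⟨⟨h1, h2⟩, h3⟩
      push_neg at h3
      exact ⟨⟨h1, by omega⟩, h3.2⟩
    · rintro ⟨⟨h1, h2⟩, h3⟩
      exact ⟨⟨h1, by omega⟩, by push_neg; exact ⟨by omega, h3⟩⟩
  unfold crossNum
  rw [hcomp]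
  have hprod : (insert (a+1) J) ×ˢ (Finset.Icc 1 a \ J)
      = ({a+1} ×ˢ (Finset.Icc 1 a \ J)) ∪ (J ×ˢ (Finset.Icc 1 a \ J)) := by
    ext ⟨i, j⟩
    simp only [Finset.mem_product, Finset.mem_insert, Finset.mem_union, Finset.mem_singleton]
    tauto
  rw [hprod, Finset.filter_union]
  have hfull : (({a+1} ×ˢ (Finset.Icc 1 a \ J)).filter (fun p => p.2 < p.1))
      = {a+1} ×ˢ (Finset.Icc 1 a \ J) := by
    rw [Finset.filter_eq_self]
    rintro ⟨i, j⟩ hp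
    simp only [Finset.mem_product, Finset.mem_singleton, Finset.mem_sdiff, Finset.mem_Icc] at hp
    simp only [hp.1]
    omega
  rw [hfull]
  rw [Finset.card_union_of_disjoint ?_, Finset.singleton_product, Finset.card_map, Nat.add_comm]
  rw [Finset.disjoint_left]
  rintro ⟨i, j⟩ hp hp2
  simp only [Finset.mem_product, Finset.mem_singleton] at hp
  simp only [Finset.mem_filter, Finset.mem_product] at hp2
  exact hnot (hp.1 ▸ hp2.1.1)

lemma chiPoly_zero {R : Type*} [Semiring R] (q : R) (a : ℕ) : chiPoly q a 0 = 1 := by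
  simp [chiPoly, crossNum_empty]

lemma chiPoly_eq_zero {R : Type*} [Semiring R] (q : R) {a k : ℕ} (h : a < k) :
    chiPoly q a k = 0 := by
  unfold chiPoly
  rw [Finset.powersetCard_eq_empty.mpr (by simpa using h), Finset.sum_empty]

lemma chiPoly_rec {R : Type*} [Semiring R] (q : R) (a k : ℕ) :
    chiPoly q (a+1) (k+1) = chiPoly q a (k+1) + q ^ (a - k) * chiPoly q a k := by
  classical
  rcases le_or_gt k a with hk | hk
  · have hicc : Finset.Icc 1 (a+1) = insert (a+1) (Finset.Icc 1 a) := by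
      ext j; simp [Finset.mem_Icc]; omega
    have hnot : (a+1) ∉ Finset.Icc 1 a := by simp
    unfold chiPoly
    rw [hicc, Finset.powersetCard_succ_insert hnot, Finset.sum_union, Finset.sum_image]
    · congr 1
      · apply Finset.sum_congr rfl
        intro I hI
        rw [crossNum_of_subset (Finset.mem_powersetCard.mp hI).1]
      · rw [Finset.mul_sum]
        apply Finset.sum_congr rfl
        intro J hJ
        obtain ⟨hJs, hJc⟩ := Finset.mem_powersetCard.mp hJ
        rw [crossNum_insert hJs, Finset.card_sdiff_of_subset hJs, Nat.card_Icc, hJc]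
        have : a + 1 - 1 - k = a - k := by omega
        rw [this, pow_add, pow_mul_comm]
    · -- injectivity of insert (a+1)
      intro I hI J hJ hIJ
      have hInot : (a+1) ∉ I := fun h => by
        have := (Finset.mem_Icc.mp ((Finset.mem_powersetCard.mp hI).1 h)).2; omega
      have hJnot : (a+1) ∉ J := fun h => by
        have := (Finset.mem_Icc.mp ((Finset.mem_powersetCard.mp hJ).1 h)).2; omega
      have : (insert (a+1) I).erase (a+1) = (insert (a+1) J).erase (a+1) := by rw [hIJ]
      rwa [Finset.erase_insert hInot, Finset.erase_insert hJnot] at this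
    · -- disjointness
      rw [Finset.disjoint_left]
      intro I hI hI2
      obtain ⟨I', hI', rfl⟩ := Finset.mem_image.mp hI2
      have : (a+1) ∉ insert (a+1) I' := fun h => by
        have := (Finset.mem_Icc.mp ((Finset.mem_powersetCard.mp hI).1 h)).2; omega
      exact this (Finset.mem_insert_self _ _)
  · rw [chiPoly_eq_zero q (by omega), chiPoly_eq_zero q (by omega),
      chiPoly_eq_zero q (by omega), mul_zero, add_zero]


lemma comm_chiPoly {R : Type*} [Ring R] {q : R} (hq : ∀ r : R, Commute q r)
    (a k : ℕ) (r : R) : Commute (chiPoly q a k) r := by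
  unfold chiPoly
  exact Commute.sum_left _ _ _ fun I _ => (hq r).pow_left _

theorem weyl_aux {R : Type*} [Ring R] {q : R} (hq : ∀ r : R, Commute q r) (x y z : R)
    (h1 : z * x = x * z + y) (h2 : y * x = q * (x * y)) (h3 : z * y = q * (y * z))
    (a b : ℕ) :
    z ^ a * x ^ b = ∑ k ∈ Finset.range (a + 1),
      chiPoly q a k * qfall q b k * (x ^ (b - k) * y ^ k * z ^ (a - k)) := by
  induction a generalizing b with
  | zero => simp [chiPoly_zero, qfall_zero]
  | succ a ih =>
    have lhs_eq : z ^ (a+1) * x ^ b =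
        (∑ k ∈ Finset.range (a + 1),
          chiPoly q a k * qfall q b k * (x ^ (b - k) * y ^ k * z ^ (a + 1 - k)))
        + ∑ k ∈ Finset.range (a + 1),
          q ^ (a - k) * chiPoly q a k * qfall q b (k+1)
            * (x ^ (b - (k+1)) * y ^ (k+1) * z ^ (a - k)) := by
      calc z ^ (a+1) * x ^ b = z ^ a * (z * x ^ b) := by rw [pow_succ, mul_assoc]
      _ = z ^ a * (x ^ b * z + qint q b * (x ^ (b-1) * y)) := by
          rw [z_mul_xpow hq x y z h1 h2 b]
      _ = (z ^ a * x ^ b) * z + qint q b * ((z ^ a * x ^ (b-1)) * y) := by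
          rw [mul_add, ← mul_assoc, pull (comm_qint hq b (z ^ a)),
            ← mul_assoc (z ^ a) (x ^ (b-1)) y]
      _ = (∑ k ∈ Finset.range (a + 1),
            chiPoly q a k * qfall q b k * (x ^ (b - k) * y ^ k * z ^ (a - k))) * z
          + qint q b * ((∑ k ∈ Finset.range (a + 1),
            chiPoly q a k * qfall q (b-1) k * (x ^ (b-1 - k) * y ^ k * z ^ (a - k))) * y) := by
          rw [ih b, ih (b-1)]
      _ = _ := by
          rw [Finset.sum_mul, Finset.sum_mul, Finset.mul_sum]
          congr 1
          · apply Finset.sum_congr rfl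
            intro k hk
            have hka : a + 1 - k = (a - k) + 1 := by
              have := Finset.mem_range.mp hk; omega
            simp only [hka, mul_assoc, ← pow_succ]
          · apply Finset.sum_congr rfl
            intro k hk
            have hbk : b - 1 - k = b - (k+1) := by omega
            calc qint q b * (chiPoly q a k * qfall q (b-1) k
                  * (x ^ (b-1 - k) * y ^ k * z ^ (a - k)) * y)
                = qint q b * (chiPoly q a k * (qfall q (b-1) k
                  * (x ^ (b-1 - k) * (y ^ k * (z ^ (a - k) * y))))) := by
                  simp only [mul_assoc]
              _ = qint q b * (chiPoly q a k * (qfall q (b-1) k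
                  * (x ^ (b-1 - k) * (y ^ k * (q ^ (a-k) * (y * z ^ (a - k))))))) := by
                  rw [zpow_mul_y hq y z h3 (a-k)]
              _ = q ^ (a-k) * (qint q b * (chiPoly q a k * (qfall q (b-1) k
                  * (x ^ (b-1 - k) * (y ^ k * (y * z ^ (a - k))))))) := by
                  rw [pull ((hq (y ^ k)).pow_left (a-k)),
                    pull ((hq (x ^ (b-1-k))).pow_left (a-k)),
                    pull ((comm_qfall hq (b-1) k (q ^ (a-k))).symm),
                    pull ((comm_chiPoly hq a k (q ^ (a-k))).symm),
                    pull ((comm_qint hq b (q ^ (a-k))).symm)]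
              _ = q ^ (a - k) * chiPoly q a k * qfall q b (k+1)
                  * (x ^ (b - (k+1)) * y ^ (k+1) * z ^ (a - k)) := by
                  rw [pull (comm_chiPoly hq a k (qint q b)), ← mul_assoc (qint q b),
                    ← qfall_succ, hbk, ← mul_assoc (y ^ k), ← pow_succ]
                  simp only [mul_assoc]
    rw [lhs_eq]
    rw [Finset.sum_range_succ'
      (fun k => chiPoly q (a+1) k * qfall q b k * (x ^ (b - k) * y ^ k * z ^ (a + 1 - k))) (a+1)]
    simp only [chiPoly_rec, add_mul, Finset.sum_add_distrib]
    rw [chiPoly_zero, qfall_zero, one_mul, one_mul]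
    have hA : (∑ k ∈ Finset.range (a + 1),
          chiPoly q a k * qfall q b k * (x ^ (b - k) * y ^ k * z ^ (a + 1 - k)))
        = (∑ k ∈ Finset.range (a + 1),
            chiPoly q a (k+1) * qfall q b (k+1) * (x ^ (b - (k+1)) * y ^ (k+1) * z ^ (a + 1 - (k+1))))
          + x ^ (b - 0) * y ^ 0 * z ^ (a + 1 - 0) := by
      have := Finset.sum_range_succ'
        (fun k => chiPoly q a k * qfall q b k * (x ^ (b - k) * y ^ k * z ^ (a + 1 - k))) (a+1)
      rw [Finset.sum_range_succ
        (fun k => chiPoly q a k * qfall q b k * (x ^ (b - k) * y ^ k * z ^ (a + 1 - k))) (a+1)] at this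
      rw [chiPoly_eq_zero q (by omega : a < a + 1), zero_mul, zero_mul, add_zero] at this
      rw [this, chiPoly_zero, qfall_zero, one_mul, one_mul]
    have hB : (∑ k ∈ Finset.range (a + 1),
          q ^ (a - k) * chiPoly q a k * qfall q b (k+1)
            * (x ^ (b - (k+1)) * y ^ (k+1) * z ^ (a - k)))
        = ∑ k ∈ Finset.range (a + 1),
            q ^ (a - k) * chiPoly q a k * qfall q b (k+1)
            * (x ^ (b - (k+1)) * y ^ (k+1) * z ^ (a + 1 - (k+1))) := by
      apply Finset.sum_congr rfl
      intro k hk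
      simp [Nat.succ_sub_succ]
    rw [hA, hB]
    abel

/-- In the q-Weyl algebra, z^a x^b = Σ_{k=0}^{min(a,b)} χ_k(a) [b]_k x^{b−k} y^k z^{a−k}. -/
theorem stmt_5 (R : Type*) [Ring R] [Algebra ℂ R] (x y z q : R)
    (hq : ∀ r : R, Commute q r)
    (h1 : z * x = x * z + y) (h2 : y * x = q * (x * y)) (h3 : z * y = q * (y * z))
    (a b : ℕ) :
    z ^ a * x ^ b = ∑ k ∈ Finset.range (min a b + 1),
      chiPoly q a k * qfall q b k * (x ^ (b - k) * y ^ k * z ^ (a - k)) := by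
  rw [weyl_aux hq x y z h1 h2 h3 a b]
  apply (Finset.sum_subset (Finset.range_subset_range.mpr (by omega)) _).symm
  intro k hk hk2
  have h1 := Finset.mem_range.mp hk
  have h2 : b < k := by
    have h3 : ¬ (k < min a b + 1) := fun h => hk2 (Finset.mem_range.mpr h)
    omega
  rw [qfall_eq_zero h2, mul_zero, zero_mul]
end

section
/- In the h-Weyl algebra ℂ⟨x,y,z⟩[h]/⟨yx − xy − z, zx − xz − zh, yz − zy⟩, for all a, b ∈ ℕ: z^a x^b = Σ_{k=0}^{b} C(b,k) a^k x^{b−k} z^a h^k, where C(b,k) is the binomial coefficient. -/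
/-- In the h-Weyl algebra ℂ⟨x,y,z⟩[h]/⟨yx−xy−z, zx−xz−zh, yz−zy⟩ (formalized: any
ℂ-algebra with elements x,y,z and a central element h satisfying the relations),
z^a x^b = Σ_{k=0}^{b} C(b,k) a^k x^{b−k} z^a h^k. -/
theorem stmt_8 (R : Type*) [Ring R] [Algebra ℂ R] (x y z h : R)
    (hc : ∀ r : R, Commute h r)
    (h1 : y * x = x * y + z) (h2 : z * x = x * z + z * h) (h3 : y * z = z * y)
    (a b : ℕ) :
    z ^ a * x ^ b = ∑ k ∈ Finset.range (b + 1),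
      (b.choose k : R) * (a : R) ^ k * (x ^ (b - k) * z ^ a * h ^ k) := by
  have pull : ∀ u : R, (∀ r : R, Commute u r) → ∀ p q : R, p * (u * q) = u * (p * q) := by
    intro u hu p q
    rw [← mul_assoc, ← (hu p).eq, mul_assoc]
  -- key: z^n * x = (x + n•h) * z^n
  have key : ∀ n : ℕ, z ^ n * x = (x + (n : R) * h) * z ^ n := by
    intro n
    induction n with
    | zero => simp
    | succ n ih =>
      calc z ^ (n+1) * x = z ^ n * (z * x) := by rw [pow_succ, mul_assoc]
        _ = z ^ n * x * z + z ^ (n+1) * h := by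
              rw [h2, mul_add, ← mul_assoc, ← mul_assoc, pow_succ]
        _ = (x + (n : R) * h) * z ^ (n+1) + h * z ^ (n+1) := by
              rw [ih, mul_assoc, ← pow_succ, (hc _).eq]
        _ = (x + ((n+1 : ℕ) : R) * h) * z ^ (n+1) := by
              rw [← add_mul]; push_cast
              rw [add_assoc, ← add_one_mul]
  -- hence z^a * x^b = (x + a•h)^b * z^a
  have key2 : z ^ a * x ^ b = ((a : R) * h + x) ^ b * z ^ a := by
    induction b with
    | zero => simp
    | succ n ih =>
      rw [pow_succ, ← mul_assoc, ih, mul_assoc, key a, ← mul_assoc, pow_succ]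
      congr 1
      rw [add_comm]
  have hcom : Commute ((a : R) * h) x := (Nat.cast_commute a x).mul_left (hc x)
  rw [key2, hcom.add_pow, Finset.sum_mul]
  refine Finset.sum_congr rfl fun k _ => ?_
  have hC : ∀ r : R, Commute ((b.choose k : R)) r := fun r => Nat.cast_commute _ r
  have hH : ∀ r : R, Commute (h ^ k) r := fun r => (hc r).pow_left k
  rw [(Nat.cast_commute a h).mul_pow]
  simp only [mul_assoc]
  rw [pull _ hC (x ^ (b-k)) (z ^ a), pull _ hC (h ^ k) _, pull _ hC ((a:R)^k) _,
    ← (hH (z ^ a)).eq, pull _ hH (x ^ (b-k)) (z ^ a)]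
end

section
/- In the h-Weyl algebra, for all a, b ∈ ℕ: y^a x^b = Σ_{k ∈ ℕ^a, |k| ≤ b} (b choose k) x^{b−|k|} y^{a−s(k)} z^{s(k)} h^{|k|−s(k)}, where the sum is over vectors k = (k_1,...,k_a) ∈ ℕ^a with |k| = k_1 + ... + k_a ≤ b, s(k) = #{i : k_i ≠ 0}, and (b choose k) = b!/(k_1!⋯k_a!(b−|k|)!). -/
open Finset

private lemma key_nat {a : ℕ} (k : Fin a → ℕ) {b j : ℕ} (hm : ∑ i, k i ≤ b)
    (hj : j ≤ b - ∑ i, k i) :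
    (b.factorial / ((∏ i, (k i).factorial) * (b - ∑ i, k i).factorial)) *
      (b - ∑ i, k i).choose j
    = b.factorial / ((j.factorial * ∏ i, (k i).factorial) * (b - (j + ∑ i, k i)).factorial) := by
  set m := ∑ i, k i with hmdef
  set D := ∏ i, (k i).factorial with hDdef
  set c := b - m with hcdef
  have hD : D ∣ m.factorial := by
    simpa [hmdef, hDdef] using Nat.prod_factorial_dvd_factorial_sum univ k
  have hdvd1 : D * c.factorial ∣ b.factorial := by
    have h0 : m.factorial * c.factorial ∣ b.factorial := by
      have := Nat.factorial_mul_factorial_dvd_factorial_add m c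
      rwa [Nat.add_sub_cancel' hm] at this
    exact dvd_trans (mul_dvd_mul_right hD _) h0
  have hdvd2 : j.factorial * (c - j).factorial ∣ c.factorial :=
    Nat.factorial_mul_factorial_dvd_factorial hj
  rw [Nat.choose_eq_factorial_div_factorial hj, Nat.div_mul_div_comm hdvd1 hdvd2,
    show D * c.factorial * (j.factorial * (c - j).factorial)
      = j.factorial * D * (c - j).factorial * c.factorial by ring,
    Nat.mul_div_mul_right _ _ (Nat.factorial_pos c),
    show c - j = b - (j + m) by omega]

private lemma w_pow {R : Type*} [Ring R] (x : R) (w : ℕ → R)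
    (hw : ∀ j, w j * x = x * w j + w (j + 1)) :
    ∀ c i : ℕ, w i * x ^ c =
      ∑ j ∈ Finset.range (c + 1), ((c.choose j : ℕ) : R) * (x ^ (c - j) * w (i + j)) := by
  intro c
  induction c with
  | zero => intro i; simp
  | succ c ih =>
    intro i
    have step : ∀ j ∈ Finset.range (c + 1),
        ((c.choose j : ℕ) : R) * (x ^ (c - j) * w (i + j)) * x
        = ((c.choose j : ℕ) : R) * (x ^ (c + 1 - j) * w (i + j))
          + ((c.choose j : ℕ) : R) * (x ^ (c - j) * w (i + j + 1)) := by
      intro j hj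
      have hjc : j ≤ c := Nat.lt_succ_iff.mp (Finset.mem_range.mp hj)
      rw [mul_assoc, mul_assoc, hw (i + j), mul_add, ← mul_assoc (x ^ (c - j)) x,
        ← pow_succ, show c - j + 1 = c + 1 - j by omega, mul_add]
    calc w i * x ^ (c + 1) = (w i * x ^ c) * x := by rw [pow_succ, ← mul_assoc]
      _ = ∑ j ∈ Finset.range (c + 1),
            ((c.choose j : ℕ) : R) * (x ^ (c - j) * w (i + j)) * x := by
          rw [ih, Finset.sum_mul]
      _ = ∑ j ∈ Finset.range (c + 1),
            (((c.choose j : ℕ) : R) * (x ^ (c + 1 - j) * w (i + j))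
              + ((c.choose j : ℕ) : R) * (x ^ (c - j) * w (i + j + 1))) :=
          Finset.sum_congr rfl step
      _ = ∑ j ∈ Finset.range (c + 1), ((c.choose j : ℕ) : R) * (x ^ (c + 1 - j) * w (i + j))
          + ∑ j ∈ Finset.range (c + 1), ((c.choose j : ℕ) : R) * (x ^ (c - j) * w (i + j + 1)) :=
          Finset.sum_add_distrib
      _ = ∑ j ∈ Finset.range (c + 1 + 1), (((c + 1).choose j : ℕ) : R)
            * (x ^ (c + 1 - j) * w (i + j)) := by
          rw [Finset.sum_range_succ' (fun j => (((c + 1).choose j : ℕ) : R)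
            * (x ^ (c + 1 - j) * w (i + j)))]
          have expand : ∀ j ∈ Finset.range (c + 1),
              (((c + 1).choose (j + 1) : ℕ) : R) * (x ^ (c + 1 - (j + 1)) * w (i + (j + 1)))
              = ((c.choose j : ℕ) : R) * (x ^ (c - j) * w (i + j + 1))
                + ((c.choose (j + 1) : ℕ) : R) * (x ^ (c + 1 - (j + 1)) * w (i + (j + 1))) := by
            intro j hj
            rw [Nat.choose_succ_succ, Nat.cast_add, add_mul, Nat.succ_sub_succ, ← add_assoc]
          rw [Finset.sum_congr rfl expand, Finset.sum_add_distrib]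
          have last : ∑ j ∈ Finset.range (c + 1),
              ((c.choose (j + 1) : ℕ) : R) * (x ^ (c + 1 - (j + 1)) * w (i + (j + 1)))
              + (((c + 1).choose 0 : ℕ) : R) * (x ^ (c + 1 - 0) * w (i + 0))
              = ∑ j ∈ Finset.range (c + 1), ((c.choose j : ℕ) : R)
                  * (x ^ (c + 1 - j) * w (i + j)) := by
            rw [show (((c + 1).choose 0 : ℕ) : R) = ((c.choose 0 : ℕ) : R) by simp,
              ← Finset.sum_range_succ' (fun j => ((c.choose j : ℕ) : R)
                * (x ^ (c + 1 - j) * w (i + j))), Finset.sum_range_succ]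
            simp
          rw [add_assoc, last, add_comm]

private def wf {R : Type*} [Ring R] (y z h : R) : ℕ → R
  | 0 => y
  | j + 1 => z * h ^ j

private lemma wf_rel {R : Type*} [Ring R] {x y z h : R}
    (hc : ∀ r : R, Commute h r) (h1 : y * x = x * y + z)
    (h2 : z * x = x * z + z * h) :
    ∀ j, wf y z h j * x = x * wf y z h j + wf y z h (j + 1) := by
  intro j
  cases j with
  | zero => simpa [wf] using h1
  | succ j =>
    show z * h ^ j * x = x * (z * h ^ j) + z * h ^ (j + 1)
    rw [mul_assoc, ((hc x).pow_left j).eq, ← mul_assoc, h2, add_mul,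
      mul_assoc x z, mul_assoc z h, ← pow_succ']

private lemma card_filter_cons {a : ℕ} (j : ℕ) (k : Fin a → ℕ) :
    (univ.filter fun i => (Fin.cons j k : Fin (a + 1) → ℕ) i ≠ 0).card
    = (if j = 0 then 0 else 1) + (univ.filter fun i => k i ≠ 0).card := by
  rw [Finset.card_filter, Finset.card_filter, Fin.sum_univ_succ]
  simp only [Fin.cons_zero, Fin.cons_succ]
  congr 1
  by_cases hj : j = 0 <;> simp [hj]

private lemma s_le_sum {a : ℕ} (k : Fin a → ℕ) :
    (univ.filter fun i => k i ≠ 0).card ≤ ∑ i, k i := by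
  rw [Finset.card_eq_sum_ones]
  refine le_trans (Finset.sum_le_sum ?_) (Finset.sum_le_sum_of_subset (Finset.filter_subset _ _))
  intro i hi
  exact Nat.one_le_iff_ne_zero.mpr (Finset.mem_filter.mp hi).2

private lemma s_le_a {a : ℕ} (k : Fin a → ℕ) :
    (univ.filter fun i => k i ≠ 0).card ≤ a := by
  simpa using Finset.card_filter_le univ (fun i => k i ≠ 0)

private lemma wf_norm {R : Type*} [Ring R] {y z h : R}
    (hc : ∀ r : R, Commute h r) (h3 : y * z = z * y)
    (j n s t : ℕ) :
    wf y z h j * (y ^ n * (z ^ s * h ^ t))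
      = y ^ (n + 1 - (if j = 0 then 0 else 1)) *
          (z ^ ((if j = 0 then 0 else 1) + s) * h ^ ((j - 1) * (if j = 0 then 0 else 1) + t)) := by
  have hyz : Commute y z := h3
  cases j with
  | zero =>
    show y * (y ^ n * (z ^ s * h ^ t)) = y ^ (n + 1 - 0) * (z ^ (0 + s) * h ^ (0 + t))
    rw [← mul_assoc, ← pow_succ', Nat.sub_zero, Nat.zero_add, Nat.zero_add]
  | succ j =>
    show z * h ^ j * (y ^ n * (z ^ s * h ^ t))
      = y ^ (n + 1 - 1) * (z ^ (1 + s) * h ^ ((j + 1 - 1) * 1 + t))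
    rw [Nat.add_sub_cancel, Nat.add_sub_cancel, Nat.mul_one, mul_assoc,
      ((hc (y ^ n)).pow_left j).left_comm, ((hc (z ^ s)).pow_left j).left_comm,
      ← pow_add, (hyz.symm.pow_right n).left_comm, ← mul_assoc z (z ^ s), ← pow_succ',
      show s + 1 = 1 + s by omega]

private lemma step_term {R : Type*} [Ring R] {x y z h : R}
    (hc : ∀ r : R, Commute h r) (h1 : y * x = x * y + z)
    (h2 : z * x = x * z + z * h) (h3 : y * z = z * y)
    {a b : ℕ} (k : Fin a → ℕ) (hm : ∑ i, k i ≤ b) :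
    y * (((b.factorial / ((∏ i, (k i).factorial) * (b - ∑ i, k i).factorial) : ℕ) : R) *
      (x ^ (b - ∑ i, k i) *
        y ^ (a - (univ.filter fun i => k i ≠ 0).card) *
        z ^ (univ.filter fun i => k i ≠ 0).card *
        h ^ ((∑ i, k i) - (univ.filter fun i => k i ≠ 0).card)))
    = ∑ j ∈ Finset.range (b - ∑ i, k i + 1),
        ((b.factorial / ((∏ i, ((Fin.cons j k : Fin (a + 1) → ℕ) i).factorial) *
            (b - ∑ i, (Fin.cons j k : Fin (a + 1) → ℕ) i).factorial) : ℕ) : R) *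
          (x ^ (b - ∑ i, (Fin.cons j k : Fin (a + 1) → ℕ) i) *
            y ^ (a + 1 - (univ.filter fun i => (Fin.cons j k : Fin (a + 1) → ℕ) i ≠ 0).card) *
            z ^ (univ.filter fun i => (Fin.cons j k : Fin (a + 1) → ℕ) i ≠ 0).card *
            h ^ ((∑ i, (Fin.cons j k : Fin (a + 1) → ℕ) i) -
              (univ.filter fun i => (Fin.cons j k : Fin (a + 1) → ℕ) i ≠ 0).card)) := by
  have hsa := s_le_a k
  have hsm := s_le_sum k
  have hsum : ∀ j : ℕ, ∑ i, (Fin.cons j k : Fin (a + 1) → ℕ) i = j + ∑ i, k i :=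
    fun j => Fin.sum_cons j k
  have hprod : ∀ j : ℕ, ∏ i, ((Fin.cons j k : Fin (a + 1) → ℕ) i).factorial
      = j.factorial * ∏ i, (k i).factorial := by
    intro j
    rw [Fin.prod_univ_succ]
    simp
  have expand : y * x ^ (b - ∑ i, k i) = ∑ j ∈ Finset.range (b - ∑ i, k i + 1),
      (((b - ∑ i, k i).choose j : ℕ) : R) * (x ^ (b - ∑ i, k i - j) * wf y z h j) := by
    have e0 := w_pow x (wf y z h) (wf_rel hc h1 h2) (b - ∑ i, k i) 0
    simp only [Nat.zero_add] at e0
    exact e0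
  rw [show x ^ (b - ∑ i, k i) *
        y ^ (a - (univ.filter fun i => k i ≠ 0).card) *
        z ^ (univ.filter fun i => k i ≠ 0).card *
        h ^ ((∑ i, k i) - (univ.filter fun i => k i ≠ 0).card)
      = x ^ (b - ∑ i, k i) *
        (y ^ (a - (univ.filter fun i => k i ≠ 0).card) *
        (z ^ (univ.filter fun i => k i ≠ 0).card *
        h ^ ((∑ i, k i) - (univ.filter fun i => k i ≠ 0).card))) by
        simp only [mul_assoc],
    ← mul_assoc y, ← (Nat.cast_commute _ y).eq, mul_assoc, ← mul_assoc y (x ^ (b - ∑ i, k i)),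
    expand, Finset.sum_mul, Finset.mul_sum]
  refine Finset.sum_congr rfl fun j hj => ?_
  have hj' : j ≤ b - ∑ i, k i := Nat.lt_succ_iff.mp (Finset.mem_range.mp hj)
  rw [hsum j, hprod j, card_filter_cons j k, ← key_nat k hm hj', Nat.cast_mul]
  simp only [mul_assoc]
  rw [show b - (j + ∑ i, k i) = b - ∑ i, k i - j by omega]
  congr 2
  rw [wf_norm hc h3 j (a - (univ.filter fun i => k i ≠ 0).card)
      ((univ.filter fun i => k i ≠ 0).card)
      ((∑ i, k i) - (univ.filter fun i => k i ≠ 0).card)]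
  by_cases hj0 : j = 0
  · simp only [hj0, if_pos]
    rw [show a - (univ.filter fun i => k i ≠ 0).card + 1 - 0
        = a + 1 - (0 + (univ.filter fun i => k i ≠ 0).card) by omega,
      show (0 - 1) * 0 + ((∑ i, k i) - (univ.filter fun i => k i ≠ 0).card)
        = 0 + ∑ i, k i - (0 + (univ.filter fun i => k i ≠ 0).card) by omega]
  · simp only [hj0, if_neg, if_false]
    rw [show a - (univ.filter fun i => k i ≠ 0).card + 1 - 1
        = a + 1 - (1 + (univ.filter fun i => k i ≠ 0).card) by omega,
      show (j - 1) * 1 + ((∑ i, k i) - (univ.filter fun i => k i ≠ 0).card)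
        = j + ∑ i, k i - (1 + (univ.filter fun i => k i ≠ 0).card) by omega]


/-- In the h-Weyl algebra, y^a x^b = Σ_{k ∈ ℕ^a, |k| ≤ b} (b choose k)
x^{b−|k|} y^{a−s(k)} z^{s(k)} h^{|k|−s(k)}, where s(k) = #{i : k_i ≠ 0} and
(b choose k) = b!/(k_1!⋯k_a!(b−|k|)!). -/
theorem stmt_9 (R : Type*) [Ring R] [Algebra ℂ R] (x y z h : R)
    (hc : ∀ r : R, Commute h r)
    (h1 : y * x = x * y + z) (h2 : z * x = x * z + z * h) (h3 : y * z = z * y)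
    (a b : ℕ) :
    y ^ a * x ^ b =
      ∑ k ∈ (Fintype.piFinset (fun _ : Fin a => Finset.range (b + 1))).filter
          (fun k => ∑ i, k i ≤ b),
        ((b.factorial / ((∏ i, (k i).factorial) * (b - ∑ i, k i).factorial) : ℕ) : R) *
          (x ^ (b - ∑ i, k i) *
            y ^ (a - (Finset.univ.filter (fun i => k i ≠ 0)).card) *
            z ^ (Finset.univ.filter (fun i => k i ≠ 0)).card *
            h ^ ((∑ i, k i) - (Finset.univ.filter (fun i => k i ≠ 0)).card)) := by
  induction a with
  | zero =>
    have hset : ((Fintype.piFinset fun _ : Fin 0 => Finset.range (b + 1)).filter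
        (fun k => ∑ i, k i ≤ b)) = {fun i => i.elim0} := by
      apply Finset.eq_singleton_iff_unique_mem.mpr
      refine ⟨Finset.mem_filter.mpr ⟨Fintype.mem_piFinset.mpr fun i => i.elim0, by simp⟩, ?_⟩
      intro g _
      funext i
      exact i.elim0
    rw [hset, Finset.sum_singleton]
    simp [Nat.div_self (Nat.factorial_pos b)]
  | succ a ih =>
    rw [pow_succ', mul_assoc, ih, Finset.mul_sum]
    refine (Finset.sum_congr rfl fun k hk =>
      step_term hc h1 h2 h3 k (Finset.mem_filter.mp hk).2).trans ?_
    rw [Finset.sum_sigma']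
    refine Finset.sum_bij (fun p _ => Fin.cons p.2 p.1) ?_ ?_ ?_ (fun p hp => rfl)
    · rintro ⟨k, j⟩ hp
      rw [Finset.mem_sigma] at hp
      obtain ⟨hk, hj⟩ := hp
      dsimp only at hk hj ⊢
      obtain ⟨hk1, hk2⟩ := Finset.mem_filter.mp hk
      have hk1' := Fintype.mem_piFinset.mp hk1
      have hjle : j ≤ b - ∑ i, k i := Nat.lt_succ_iff.mp (Finset.mem_range.mp hj)
      refine Finset.mem_filter.mpr ⟨Fintype.mem_piFinset.mpr ?_, ?_⟩
      · intro i
        refine Fin.cases ?_ ?_ i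
        · rw [Fin.cons_zero]
          exact Finset.mem_range.mpr (by omega)
        · intro i'
          rw [Fin.cons_succ]
          have := Finset.mem_range.mp (hk1' i')
          exact Finset.mem_range.mpr this
      · rw [Fin.sum_cons]
        omega
    · rintro ⟨k1, j1⟩ hp1 ⟨k2, j2⟩ hp2 hEq
      have hj : j1 = j2 := by
        have := congrFun hEq 0
        simpa using this
      have hk : k1 = k2 := by
        funext i
        have := congrFun hEq i.succ
        simpa using this
      subst hj
      subst hk
      rfl
    · intro k' hk'
      obtain ⟨hk1, hk2⟩ := Finset.mem_filter.mp hk'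
      have hk1' := Fintype.mem_piFinset.mp hk1
      have hsum' : ∑ i, k' i = k' 0 + ∑ i, Fin.tail k' i := by
        rw [Fin.sum_univ_succ]
        rfl
      refine ⟨⟨Fin.tail k', k' 0⟩, ?_, Fin.cons_self_tail k'⟩
      rw [Finset.mem_sigma]
      dsimp only
      constructor
      · refine Finset.mem_filter.mpr ⟨Fintype.mem_piFinset.mpr fun i => hk1' i.succ, by omega⟩
      · have h0 := Finset.mem_range.mp (hk1' 0)
        exact Finset.mem_range.mpr (by omega)
end

section
/- In U(sl_2) presented as ℂ⟨x,y,z⟩ modulo zx = xz + y, yx = xy − 2x, zy = yz − 2z, for all a, b ∈ ℕ: z^a x^b = Σ_{0 ≤ s ≤ k ≤ min(a,b)} ((a)_k (b)_k / k!) · e_{k−s}^{k}(−a−b+2k) · x^{b−k} y^{s} z^{a−k}, where (a)_k = a(a−1)⋯(a−k+1) is the falling factorial and e_{j}^{k}(c) denotes the j-th elementary symmetric polynomial evaluated at (c, c−1, ..., c−k+1). -/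
open Polynomial Finset

section Stmt14Aux

variable {R : Type*} [Ring R] (x y z : R)

/-- key polynomial -/
noncomputable def stmtP (a b k : ℕ) : Polynomial ℤ :=
  ∏ i ∈ Finset.range k, (X + C (2*(k:ℤ) - (a:ℤ) - (b:ℤ) - (i:ℤ)))

lemma stmt_zxpow (h1 : z * x = x * z + y) (h2 : y * x = x * y - 2 * x) (m : ℕ) :
    z * x ^ m = x ^ m * z + (m : R) * (x ^ (m-1) * (y - ((m-1 : ℕ) : R))) := by
  induction m with
  | zero => simp
  | succ m ih =>
    rcases m with _ | m
    · simpa using h1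
    · have key : (y - ((m : ℕ) : R)) * x = x * (y - (((m+2 : ℕ)) : R)) := by
        have hc : ∀ r : R, ((m:ℕ) : R) * r = r * ((m:ℕ) : R) := fun r => (Nat.cast_commute m r).eq
        push_cast
        rw [sub_mul, h2]
        noncomm_ring
        simp only [hc, mul_assoc]
      calc z * x ^ (m+2) = (z * x ^ (m+1)) * x := by rw [pow_succ, mul_assoc]
        _ = (x ^ (m+1) * z + ((m+1 : ℕ) : R) * (x ^ m * (y - ((m : ℕ) : R)))) * x := by
              rw [ih]; norm_num
        _ = x ^ (m+1) * (z * x) + ((m+1 : ℕ) : R) * (x ^ m * ((y - ((m : ℕ) : R)) * x)) := by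
              noncomm_ring
        _ = x ^ (m+1) * (x * z + y) + ((m+1 : ℕ) : R) * (x ^ m * (x * (y - ((m+2 : ℕ) : R)))) := by
              rw [h1, key]
        _ = x ^ (m+2) * z + ((m+2 : ℕ) : R) * (x ^ (m+1) * (y - ((m+1 : ℕ) : R))) := by
              have hc : ∀ r : R, ((m:ℕ) : R) * r = r * ((m:ℕ) : R) := fun r => (Nat.cast_commute m r).eq
              push_cast
              noncomm_ring
              simp only [hc, mul_assoc]
              abel

lemma stmt_zaeval (h3 : z * y = y * z - 2 * z) (p : Polynomial ℤ) :
    z * aeval y p = aeval y (p.comp (X - 2)) * z := by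
  induction p using Polynomial.induction_on with
  | C a => simpa using (Int.cast_commute a z).symm.eq
  | add p q hp hq => simp only [map_add, add_comp, mul_add, add_mul, hp, hq]
  | monomial n a ih =>
    have e1 : (C a * X ^ (n+1) : Polynomial ℤ) = (C a * X ^ n) * X := by ring
    rw [e1, map_mul, mul_comp, ← mul_assoc, ih, map_mul, X_comp]
    rw [mul_assoc, mul_assoc]
    congr 1
    have : aeval y (X - 2 : Polynomial ℤ) = y - 2 := by simp [map_ofNat]
    rw [this, aeval_X, sub_mul, h3]

lemma stmtP_eq_sum (a b k : ℕ) :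
    stmtP a b k = ∑ s ∈ Finset.range (k+1),
      C (∑ S ∈ (Finset.range k).powersetCard (k - s),
          ∏ i ∈ S, (2*(k:ℤ) - (a:ℤ) - (b:ℤ) - (i:ℤ))) * X ^ s := by
  set t : ℕ → ℤ := fun i => 2*(k:ℤ) - (a:ℤ) - (b:ℤ) - (i:ℤ) with ht
  have e1 : stmtP a b k = ∑ T ∈ (Finset.range k).powerset,
      (∏ i ∈ T, C (t i)) * ∏ i ∈ Finset.range k \ T, (X : Polynomial ℤ) := by
    rw [stmtP, ← Finset.prod_add]
    exact Finset.prod_congr rfl fun i _ => add_comm _ _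
  rw [e1, Finset.sum_powerset, Finset.card_range]
  rw [← Finset.sum_range_reflect]
  refine Finset.sum_congr rfl fun s hs => ?_
  have hs' : s ≤ k := Nat.lt_succ_iff.mp (Finset.mem_range.mp hs)
  have h2 : k + 1 - 1 - s = k - s := by omega
  rw [h2, map_sum, Finset.sum_mul]
  refine Finset.sum_congr rfl fun T hT => ?_
  rw [Finset.mem_powersetCard] at hT
  rw [Finset.prod_const, Finset.card_sdiff_of_subset hT.1, Finset.card_range, hT.2,
    show k - (k - s) = s from by omega, ← map_prod]

lemma stmt_keynum (a k : ℕ) : (a.choose (k+1) : ℤ) * (k+1) = (a.choose k : ℤ) * ((a:ℤ) - k) := by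
  rcases le_or_gt k a with h | h
  · have := Nat.choose_succ_right_eq a k
    have hc : ((a - k : ℕ) : ℤ) = (a:ℤ) - k := by
      push_cast [Nat.cast_sub h]; ring
    rw [← hc]
    exact_mod_cast this
  · rw [Nat.choose_eq_zero_of_lt h, Nat.choose_eq_zero_of_lt (by omega)]
    simp

lemma stmt_lin_comp (A B : ℤ) (h : A - 2 = B) :
    (X + C A).comp (X - 2) = (X : Polynomial ℤ) + C B := by
  subst h
  rw [add_comp, X_comp, C_comp, map_sub, ← map_ofNat (C : ℤ →+* Polynomial ℤ) 2]
  ring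

lemma stmt_F1 (a b k : ℕ) :
    stmtP (a+1) b (k+1) = stmtP a b k * (X + C (2*(k:ℤ) + 1 - a - b)) := by
  rw [stmtP, Finset.prod_range_succ', stmtP]
  congr 1
  · refine Finset.prod_congr rfl fun i _ => ?_
    congr 1
    push_cast
    ring
  · congr 1
    push_cast
    ring

lemma stmt_F2 (a b k : ℕ) :
    (stmtP a b (k+1)).comp (X - 2) = stmtP a b k * (X + C ((k:ℤ) - a - b)) := by
  rw [stmtP, Polynomial.prod_comp, Finset.prod_range_succ, stmtP]
  congr 1
  · refine Finset.prod_congr rfl fun i _ => ?_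
    rw [stmt_lin_comp _ (2*(k:ℤ) - a - b - i) (by push_cast; ring)]
  · rw [stmt_lin_comp _ ((k:ℤ) - a - b) (by push_cast; ring)]

lemma stmt_J (a b k : ℕ) (hk : k + 1 ≤ b) :
    (((a+1).choose (k+1) * b.descFactorial (k+1) : ℕ) : ℤ) • stmtP (a+1) b (k+1)
      = ((a.choose (k+1) * b.descFactorial (k+1) : ℕ) : ℤ) • (stmtP a b (k+1)).comp (X - 2)
      + ((a.choose k * b.descFactorial (k+1) : ℕ) : ℤ) •
          ((X - C ((b - (k+1) : ℕ) : ℤ)) * stmtP a b k) := by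
  rw [stmt_F1, stmt_F2]
  have hv : ((b - (k+1) : ℕ) : ℤ) = (b:ℤ) - k - 1 := by
    have := Nat.cast_sub hk (R := ℤ); omega
  rw [hv]
  have hp : ((a+1).choose (k+1) : ℤ) = (a.choose k : ℤ) + (a.choose (k+1) : ℤ) := by
    exact_mod_cast Nat.choose_succ_succ' a k
  have hkey := stmt_keynum a k
  have hsm : ∀ (n : ℤ) (p : Polynomial ℤ), n • p = C n * p := fun n p => by
    rw [zsmul_eq_mul, ← Polynomial.C_eq_intCast]; norm_cast
  simp only [hsm]
  push_cast
  set A1 : ℤ := ((a+1).choose (k+1) : ℤ)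
  set A2 : ℤ := (a.choose (k+1) : ℤ)
  set A3 : ℤ := (a.choose k : ℤ)
  set D : ℤ := (b.descFactorial (k+1) : ℤ)
  have c1 : C A1 = C A2 + C A3 := by rw [← map_add]; congr 1; omega
  have c2 : C A1 * C (2*(k:ℤ) + 1 - a - b)
      = C A2 * C ((k:ℤ) - a - b) - C A3 * C ((b:ℤ) - k - 1) := by
    rw [← map_mul, ← map_mul, ← map_mul, ← map_sub]
    congr 1
    linear_combination (2*(k:ℤ) + 1 - (a:ℤ) - (b:ℤ)) * hp + hkey
  have lin : C (A1*D) * ((X:Polynomial ℤ) + C (2*(k:ℤ) + 1 - a - b))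
      = C (A2*D) * ((X:Polynomial ℤ) + C ((k:ℤ) - a - b))
        + C (A3*D) * ((X:Polynomial ℤ) - C ((b:ℤ) - k - 1)) := by
    simp only [map_mul, Polynomial.C_eq_natCast]
    linear_combination (C D * (X:Polynomial ℤ)) * c1 + C D * c2
  have goalC : C (A1 * D) * (stmtP a b k * ((X:Polynomial ℤ) + C (2*(k:ℤ) + 1 - a - b)))
      = C (A2 * D) * (stmtP a b k * ((X:Polynomial ℤ) + C ((k:ℤ) - a - b)))
        + C (A3 * D) * (((X:Polynomial ℤ) - C ((b:ℤ) - k - 1)) * stmtP a b k) := by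
    linear_combination stmtP a b k * lin
  convert goalC using 2

lemma stmtP_zero (a b : ℕ) : stmtP a b 0 = 1 := by simp [stmtP]

lemma stmt_step_term (h1 : z * x = x * z + y) (h2 : y * x = x * y - 2 * x)
    (h3 : z * y = y * z - 2 * z) (m n : ℕ) (p : Polynomial ℤ) :
    z * (x ^ m * aeval y p * z ^ n)
      = x ^ m * aeval y (p.comp (X - 2)) * z ^ (n + 1)
        + (m : R) * (x ^ (m-1) * aeval y ((X - C ((m-1 : ℕ) : ℤ)) * p) * z ^ n) := by
  have hyc : aeval y ((X - C ((m-1 : ℕ) : ℤ)) * p) = (y - ((m-1:ℕ) : R)) * aeval y p := by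
    rw [map_mul, map_sub, aeval_X, aeval_C]
    push_cast
    norm_num
  rw [hyc]
  have e0 : z * (x ^ m * aeval y p * z ^ n) = (z * x ^ m) * (aeval y p * z ^ n) := by
    noncomm_ring
  rw [e0, stmt_zxpow x y z h1 h2 m, add_mul]
  congr 1
  · calc x ^ m * z * (aeval y p * z ^ n) = x ^ m * ((z * aeval y p) * z ^ n) := by noncomm_ring
      _ = x ^ m * ((aeval y (p.comp (X - 2)) * z) * z ^ n) := by rw [stmt_zaeval y z h3]
      _ = x ^ m * aeval y (p.comp (X - 2)) * z ^ (n+1) := by rw [pow_succ']; noncomm_ring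
  · noncomm_ring

lemma stmt_term (a b k : ℕ) (hkb : k + 1 ≤ b) :
    (((a+1).choose (k+1) * b.descFactorial (k+1) : ℕ) : R)
        * (x ^ (b-(k+1)) * aeval y (stmtP (a+1) b (k+1)) * z ^ (a-k))
      = ((a.choose (k+1) * b.descFactorial (k+1) : ℕ) : R)
          * (x ^ (b-(k+1)) * aeval y ((stmtP a b (k+1)).comp (X - 2)) * z ^ (a-k))
        + ((a.choose k * b.descFactorial (k+1) : ℕ) : R)
          * (x ^ (b-(k+1)) * aeval y ((X - C ((b-(k+1) : ℕ) : ℤ)) * stmtP a b k) * z ^ (a-k)) := by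
  have hJ := congrArg (Polynomial.aeval y (R := ℤ) (A := R)) (stmt_J a b k hkb)
  simp only [map_add, zsmul_eq_mul, map_mul, map_intCast, map_natCast, Int.cast_natCast] at hJ
  have hpull : ∀ (N : ℕ) (A : R),
      (N : R) * (x ^ (b-(k+1)) * A * z ^ (a-k)) = x ^ (b-(k+1)) * ((N : R) * A) * z ^ (a-k) := by
    intro N A
    rw [← mul_assoc, ← mul_assoc, (Nat.cast_commute N (x ^ (b-(k+1)))).eq, mul_assoc (x ^ (b-(k+1)))]
  rw [hpull, hpull, hpull, ← add_mul, ← mul_add]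
  simp only [map_mul, Polynomial.C_eq_natCast]
  rw [hJ]

lemma stmt_main (h1 : z * x = x * z + y) (h2 : y * x = x * y - 2 * x)
    (h3 : z * y = y * z - 2 * z) (b : ℕ) : ∀ a : ℕ, z ^ a * x ^ b
    = ∑ k ∈ Finset.range (b+1), ((a.choose k * b.descFactorial k : ℕ) : R)
        * (x ^ (b-k) * aeval y (stmtP a b k) * z ^ (a-k)) := by
  intro a
  induction a with
  | zero =>
    rw [Finset.sum_eq_single 0]
    · simp [stmtP_zero]
    · intro k _ hk
      rw [Nat.choose_eq_zero_of_lt (by omega)]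
      simp
    · intro h
      exact absurd (Finset.mem_range.mpr (by omega)) h
  | succ a ih =>
    have hz : z ^ (a+1) * x ^ b = z * (z ^ a * x ^ b) := by rw [pow_succ', mul_assoc]
    have hcomm : ∀ (N : ℕ) (T : R), z * ((N:R) * T) = (N:R) * (z * T) := fun N T => by
      rw [← mul_assoc, ← (Nat.cast_commute N z).eq, mul_assoc]
    rw [hz, ih, Finset.mul_sum]
    simp only [hcomm, stmt_step_term x y z h1 h2 h3, mul_add]
    rw [Finset.sum_add_distrib]
    have hS2 : (∑ k ∈ Finset.range (b+1), ((a.choose k * b.descFactorial k : ℕ) : R)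
          * (((b-k : ℕ) : R) * (x ^ (b-k-1)
              * aeval y ((X - C ((b-k-1 : ℕ) : ℤ)) * stmtP a b k) * z ^ (a-k))))
        = ∑ k ∈ Finset.range b, ((a.choose k * b.descFactorial k : ℕ) : R)
          * (((b-k : ℕ) : R) * (x ^ (b-k-1)
              * aeval y ((X - C ((b-k-1 : ℕ) : ℤ)) * stmtP a b k) * z ^ (a-k))) := by
      rw [Finset.sum_range_succ, Nat.sub_self]
      simp
    rw [hS2, Finset.sum_range_succ' (fun k => ((a.choose k * b.descFactorial k : ℕ) : R)
        * (x ^ (b-k) * aeval y ((stmtP a b k).comp (X - 2)) * z ^ ((a-k)+1)))]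
    rw [Finset.sum_range_succ' (fun k => (((a+1).choose k * b.descFactorial k : ℕ) : R)
        * (x ^ (b-k) * aeval y (stmtP (a+1) b k) * z ^ ((a+1)-k)))]
    have h00 : ((a.choose 0 * b.descFactorial 0 : ℕ) : R)
          * (x ^ (b-0) * aeval y ((stmtP a b 0).comp (X - 2)) * z ^ ((a-0)+1))
        = (((a+1).choose 0 * b.descFactorial 0 : ℕ) : R)
          * (x ^ (b-0) * aeval y (stmtP (a+1) b 0) * z ^ ((a+1)-0)) := by
      simp [stmtP_zero]
    rw [h00, add_right_comm]
    congr 1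
    rw [← Finset.sum_add_distrib]
    refine Finset.sum_congr rfl fun k hk => ?_
    have hkb : k + 1 ≤ b := Finset.mem_range.mp hk
    have hT1 : ((a.choose (k+1) * b.descFactorial (k+1) : ℕ) : R)
          * (x ^ (b-(k+1)) * aeval y ((stmtP a b (k+1)).comp (X - 2)) * z ^ ((a-(k+1))+1))
        = ((a.choose (k+1) * b.descFactorial (k+1) : ℕ) : R)
          * (x ^ (b-(k+1)) * aeval y ((stmtP a b (k+1)).comp (X - 2)) * z ^ (a-k)) := by
      rcases le_or_gt (k+1) a with h | h
      · rw [show a-(k+1)+1 = a-k from by omega]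
      · rw [Nat.choose_eq_zero_of_lt h]
        simp
    have hT2 : ((a.choose k * b.descFactorial k : ℕ) : R)
          * (((b-k : ℕ) : R) * (x ^ (b-k-1)
              * aeval y ((X - C ((b-k-1 : ℕ) : ℤ)) * stmtP a b k) * z ^ (a-k)))
        = ((a.choose k * b.descFactorial (k+1) : ℕ) : R)
          * (x ^ (b-(k+1)) * aeval y ((X - C ((b-(k+1) : ℕ) : ℤ)) * stmtP a b k) * z ^ (a-k)) := by
      rw [← mul_assoc, Nat.sub_sub,
        show ((a.choose k * b.descFactorial k : ℕ) : R) * ((b-k : ℕ) : R)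
            = ((a.choose k * b.descFactorial (k+1) : ℕ) : R) from by
          rw [← Nat.cast_mul]; congr 1; rw [Nat.descFactorial_succ]; ring]
    rw [hT1, hT2, Nat.succ_sub_succ]
    exact (stmt_term x y z a b k hkb).symm

end Stmt14Aux

/-- In U(sl₂) presented as ℂ⟨x,y,z⟩ modulo zx = xz + y, yx = xy − 2x, zy = yz − 2z:
z^a x^b = Σ_{0 ≤ s ≤ k ≤ min(a,b)} ((a)_k (b)_k / k!) e_{k−s}^{k}(−a−b+2k) x^{b−k} y^s z^{a−k},
where (a)_k is the falling factorial and e_j^k(c) = e_j(c, c−1, ..., c−k+1). -/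
theorem stmt_14 (R : Type*) [Ring R] [Algebra ℂ R] (x y z : R)
    (h1 : z * x = x * z + y) (h2 : y * x = x * y - 2 * x) (h3 : z * y = y * z - 2 * z)
    (a b : ℕ) :
    z ^ a * x ^ b = ∑ k ∈ Finset.range (min a b + 1), ∑ s ∈ Finset.range (k + 1),
      ((a.descFactorial k * b.descFactorial k / k.factorial : ℕ) : R) *
        (((∑ S ∈ (Finset.range k).powersetCard (k - s),
            ∏ i ∈ S, ((-(a : ℤ) - (b : ℤ) + 2 * (k : ℤ)) - (i : ℤ))) : ℤ) : R) *
        (x ^ (b - k) * y ^ s * z ^ (a - k)) := by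
  rw [stmt_main x y z h1 h2 h3 b a]
  have hvan : ∀ k ∈ Finset.range (b+1), k ∉ Finset.range (min a b + 1) →
      (∑ s ∈ Finset.range (k + 1),
        ((a.descFactorial k * b.descFactorial k / k.factorial : ℕ) : R) *
          (((∑ S ∈ (Finset.range k).powersetCard (k - s),
              ∏ i ∈ S, ((-(a : ℤ) - (b : ℤ) + 2 * (k : ℤ)) - (i : ℤ))) : ℤ) : R) *
          (x ^ (b - k) * y ^ s * z ^ (a - k))) = 0 := by
    intro k hk hk'
    have ha : a < k := by
      simp only [Finset.mem_range] at hk hk'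
      omega
    rw [Nat.descFactorial_eq_zero_iff_lt.mpr ha]
    simp
  rw [Finset.sum_subset (Finset.range_subset_range.mpr (by omega : min a b + 1 ≤ b + 1)) hvan]
  refine Finset.sum_congr rfl fun k hk => ?_
  have hco : a.descFactorial k * b.descFactorial k / k.factorial
      = a.choose k * b.descFactorial k := by
    rw [Nat.descFactorial_eq_factorial_mul_choose, mul_assoc,
      Nat.mul_div_cancel_left _ k.factorial_pos]
  rw [hco, stmtP_eq_sum, map_sum, Finset.mul_sum, Finset.sum_mul, Finset.mul_sum]
  refine Finset.sum_congr rfl fun s hs => ?_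
  have hesymm : (∑ S ∈ (Finset.range k).powersetCard (k - s),
        ∏ i ∈ S, (2*(k:ℤ) - (a:ℤ) - (b:ℤ) - (i:ℤ)))
      = (∑ S ∈ (Finset.range k).powersetCard (k - s),
        ∏ i ∈ S, ((-(a : ℤ) - (b : ℤ) + 2 * (k : ℤ)) - (i : ℤ))) := by
    refine Finset.sum_congr rfl fun S _ => Finset.prod_congr rfl fun i _ => by ring
  rw [map_mul, aeval_C, map_pow, aeval_X, algebraMap_int_eq, eq_intCast, hesymm]
  set e : ℤ := (∑ S ∈ (Finset.range k).powersetCard (k - s),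
      ∏ i ∈ S, ((-(a : ℤ) - (b : ℤ) + 2 * (k : ℤ)) - (i : ℤ)))
  rw [show x ^ (b-k) * ((e:R) * y ^ s) = (e:R) * (x ^ (b-k) * y ^ s) from by
    rw [← mul_assoc, ← (Int.cast_commute e (x ^ (b-k))).eq, mul_assoc]]
  rw [show ((a.choose k * b.descFactorial k : ℕ) : R) * ((e:R) * (x ^ (b-k) * y ^ s) * z ^ (a-k))
      = ((a.choose k * b.descFactorial k : ℕ) : R) * (e:R) * (x ^ (b-k) * y ^ s * z ^ (a-k)) from by
    noncomm_ring]
end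

section
/- In the q-oscillator algebra ℂ⟨x,y⟩[q,h]/⟨yx − qxy − h⟩, for all a, b ∈ ℕ: y^a x^b = Σ_{k=0}^{min(a,b)} N(a,b,k) x^{b−k} y^{a−k} h^k, where the coefficients N(a,b,k) ∈ ℕ[q] satisfy the recursions N(a+1,b,k) = q^{b−k} N(a,b,k) + [b−k+1] N(a,b,k−1) (with [m] = 1+q+...+q^{m−1}), N(a,0,k) = δ_{k,0}, N(0,b,k) = δ_{k,0}. -/
/-- In the q-oscillator algebra, y^a x^b = Σ_{k=0}^{min(a,b)} N(a,b,k) x^{b−k} y^{a−k} h^k,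
where the normal coordinates N(a,b,k) satisfy N(a+1,b,k) = q^{b−k} N(a,b,k)
+ [b−k+1] N(a,b,k−1) (split below into the cases k = 0 and k = k'+1, with the
convention N(a,b,−1) = 0), N(a,0,k) = δ_{k,0}, N(0,b,k) = δ_{k,0}. -/
theorem stmt_17 (R : Type*) [Ring R] [Algebra ℂ R] (x y q h : R)
    (hq : ∀ r : R, Commute q r) (hh : ∀ r : R, Commute h r)
    (hrel : y * x = q * (x * y) + h)
    (N : ℕ → ℕ → ℕ → R)
    (hNa0 : ∀ a k, N a 0 k = if k = 0 then 1 else 0)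
    (hN0b : ∀ b k, N 0 b k = if k = 0 then 1 else 0)
    (hrec0 : ∀ a b, N (a + 1) b 0 = q ^ b * N a b 0)
    (hrec : ∀ a b k, N (a + 1) b (k + 1) =
      q ^ (b - (k + 1)) * N a b (k + 1) + qint q (b - k) * N a b k)
    (a b : ℕ) :
    y ^ a * x ^ b = ∑ k ∈ Finset.range (min a b + 1),
      N a b k * (x ^ (b - k) * y ^ (a - k) * h ^ k) := by
  have hqp : ∀ (n : ℕ) (r : R), Commute (q ^ n) r := fun n r => (hq r).pow_left n
  have hqi : ∀ (m : ℕ) (r : R), Commute (qint q m) r := by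
    intro m r
    unfold qint
    exact Commute.sum_left _ _ _ (fun i _ => hqp i r)
  have hNc : ∀ a b k (r : R), Commute (N a b k) r := by
    intro a
    induction a with
    | zero =>
      intro b k r; rw [hN0b]
      split
      · exact Commute.one_left r
      · exact Commute.zero_left r
    | succ a ih =>
      intro b k r
      cases k with
      | zero => rw [hrec0]; exact (hqp b r).mul_left (ih b 0 r)
      | succ k =>
        rw [hrec]
        exact Commute.add_left ((hqp _ r).mul_left (ih b (k+1) r))
          ((hqi _ r).mul_left (ih b k r))
  have hqint0 : qint q 0 = 0 := by simp [qint]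
  have hNz : ∀ a b k, min a b < k → N a b k = 0 := by
    intro a
    induction a with
    | zero =>
      intro b k hk
      have : k ≠ 0 := by omega
      rw [hN0b, if_neg this]
    | succ a ih =>
      intro b k hk
      cases k with
      | zero => exact absurd hk (Nat.not_lt_zero _)
      | succ k =>
        rw [hrec, ih b (k+1) (by omega)]
        rcases le_or_gt b k with hb | hb
        · have hbk : b - k = 0 := by omega
          rw [hbk, hqint0]
          simp
        · rw [ih b k (by omega)]
          simp
  have swap : ∀ (c r s : R), (∀ t : R, Commute c t) → r * (c * s) = c * (r * s) := by
    intro c r s hc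
    rw [← mul_assoc, (hc r).symm.eq, mul_assoc]
  have hyx : ∀ m : ℕ, y * x ^ m = q ^ m * (x ^ m * y) + qint q m * (x ^ (m-1) * h) := by
    intro m
    induction m with
    | zero => simp [hqint0]
    | succ n ih =>
      have e0 : y * x ^ (n+1) = (y * x ^ n) * x := by rw [pow_succ, ← mul_assoc]
      rw [e0, ih, add_mul]
      rw [mul_assoc (q^n), mul_assoc (qint q n), mul_assoc (x^n), mul_assoc (x^(n-1)),
        hrel, (hh x).eq]
      rw [mul_add (x^n), swap q (x^n) (x*y) hq]
      rw [mul_add (q^n), ← mul_assoc (q^n) q, ← pow_succ]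
      rw [← mul_assoc (x^n) x y, ← pow_succ]
      have eq1 : qint q (n+1) = qint q n + q ^ n := by
        simp [qint, Finset.sum_range_succ]
      cases n with
      | zero =>
        simp [hqint0, eq1]
      | succ m =>
        have e1 : (m+1) - 1 = m := rfl
        have e2 : (m+1+1) - 1 = m+1 := rfl
        rw [e1, e2, ← mul_assoc (x^m) x h, ← pow_succ, eq1, add_mul]
        abel
  have step : ∀ a b k, y * (N a b k * (x ^ (b-k) * y ^ (a-k) * h ^ k)) =
      q ^ (b-k) * N a b k * (x ^ (b-k) * y ^ (a+1-k) * h ^ k)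
      + qint q (b-k) * N a b k * (x ^ (b-(k+1)) * y ^ (a-k) * h ^ (k+1)) := by
    intro a b k
    rcases lt_or_ge a k with hk | hk
    · rw [hNz a b k (by omega)]
      simp
    · have ea : a + 1 - k = (a - k) + 1 := by omega
      rw [ea]
      rw [swap (N a b k) y _ (hNc a b k)]
      rw [mul_assoc (x^(b-k)) (y^(a-k)) (h^k), ← mul_assoc y (x^(b-k)) _]
      rw [hyx (b-k), add_mul, mul_add]
      congr 1
      · rw [pow_succ' y (a-k)]
        simp only [mul_assoc]
        rw [swap (q^(b-k)) (N a b k) _ (hqp (b-k))]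
      · have eb : b - k - 1 = b - (k+1) := Nat.sub_sub b k 1
        rw [eb, pow_succ' h k]
        simp only [mul_assoc]
        rw [swap (qint q (b-k)) (N a b k) _ (hqi (b-k))]
        rw [← swap h (y^(a-k)) (h^k) hh]
  have key : ∀ a b, y ^ a * x ^ b = ∑ k ∈ Finset.range (b+1),
      N a b k * (x ^ (b-k) * y ^ (a-k) * h ^ k) := by
    intro a
    induction a with
    | zero =>
      intro b
      rw [Finset.sum_range_succ']
      simp [hN0b]
    | succ a ih =>
      intro b
      rw [pow_succ' y a, mul_assoc, ih b, Finset.mul_sum]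
      rw [Finset.sum_congr rfl (fun k _ => step a b k)]
      rw [Finset.sum_add_distrib]
      conv_rhs => rw [Finset.sum_range_succ']
      rw [hrec0]
      have e2 : ∀ k ∈ Finset.range b,
          N (a+1) b (k+1) * (x^(b-(k+1)) * y^(a+1-(k+1)) * h^(k+1)) =
          q^(b-(k+1)) * N a b (k+1) * (x^(b-(k+1)) * y^(a+1-(k+1)) * h^(k+1))
          + qint q (b-k) * N a b k * (x^(b-(k+1)) * y^(a+1-(k+1)) * h^(k+1)) := by
        intro k _
        rw [hrec, add_mul]
      rw [Finset.sum_congr rfl e2, Finset.sum_add_distrib]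
      rw [Finset.sum_range_succ'
        (fun k => q^(b-k) * N a b k * (x^(b-k) * y^(a+1-k) * h^k)) b]
      rw [Finset.sum_range_succ
        (fun k => qint q (b-k) * N a b k * (x^(b-(k+1)) * y^(a-k) * h^(k+1))) b]
      simp only [Nat.sub_zero, Nat.sub_self, Nat.succ_sub_succ]
      rw [hqint0, zero_mul, zero_mul, add_zero]
      abel
  rw [key a b]
  have hsub : Finset.range (min a b + 1) ⊆ Finset.range (b + 1) :=
    Finset.range_subset_range.mpr (by omega)
  refine (Finset.sum_subset hsub ?_).symm
  intro k hk hk'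
  rw [hNz a b k (by simp at hk hk' ⊢; omega), zero_mul]
end
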